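/- Let u ∈ 𝒪^× be a unit whose residue res(u) is not a square in 𝔽. Then {u}·{u} = 0 in k^M(F). -/

import Mathlib

/-!
Since `{a}{-a} = 0` and `2 = 0`, always `{a}{a} = {a}{-1}`, so it suffices to show
`{u}{-1} = 0`. Over the finite residue field of odd order the nonsquare `res u` is a sum
`p² + q²` of two nonzero squares. Lifting `q / p` to `y`, the element `u⁻¹(1 + y²)` has the
nonzero square residue `p⁻²`, hence is a square `x²` by Hensel's lemma (Newton's iteration
for the square root, which converges since `2` is a unit). Then `1 - u x² = -y²`, and the
Steinberg relation for `u x²` gives `{u}{-1} = 0`.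
-/

/-- A nondyadic `p`-adic field packaged as data: a field `F` of characteristic zero,
complete with respect to a surjective discrete valuation `v : Fˣ → ℤ`, with valuation
ring `O`, residue field `K` (finite of odd cardinality in applications), and residue
(quotient) map `res : O →+* K` whose kernel is the maximal ideal `𝔪 = {x : v x ≥ 1}`. -/
structure PadicData (F K : Type) [Field F] [Field K] where
  v : Fˣ → ℤ
  v_mul : ∀ x y : Fˣ, v (x * y) = v x + v y
  v_surj : Function.Surjective v
  v_ultra : ∀ (x y : Fˣ) (h : (x : F) + (y : F) ≠ 0),
      min (v x) (v y) ≤ v (Units.mk0 ((x : F) + (y : F)) h)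
  O : Subring F
  mem_O : ∀ x : F, x ∈ O ↔ ∀ h : x ≠ 0, 0 ≤ v (Units.mk0 x h)
  res : O →+* K
  res_surj : Function.Surjective res
  res_eq_zero : ∀ x : O, res x = 0 ↔ ∀ h : (x : F) ≠ 0, 1 ≤ v (Units.mk0 (x : F) h)
  complete : ∀ f : ℕ → F,
      (∀ N : ℤ, ∃ M : ℕ, ∀ m, M ≤ m → ∀ n, M ≤ n → ∀ h : f m - f n ≠ 0,
        N ≤ v (Units.mk0 (f m - f n) h)) →
      ∃ a : F, ∀ N : ℤ, ∃ M : ℕ, ∀ n, M ≤ n → ∀ h : f n - a ≠ 0,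
        N ≤ v (Units.mk0 (f n - a) h)
/-- The defining relations of mod 2 Milnor K-theory on the tensor algebra
`T(F^×)` (over `ℤ`, with `F^×` written additively): the Steinberg elements
`{a}·{1−a}` for `a ∈ F^× \ {1}` are set to `0`, and `2·1` is set to `0`.
Quotienting by `MilnorRel` realizes the quotient by the two-sided ideal `J`
generated by these elements. -/
inductive MilnorRel (F : Type) [Field F] :
    TensorAlgebra ℤ (Additive Fˣ) → TensorAlgebra ℤ (Additive Fˣ) → Prop
  | steinberg (a : Fˣ) (h : (1 : F) - (a : F) ≠ 0) :
      MilnorRel F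
        (TensorAlgebra.ι ℤ (Additive.ofMul a) *
          TensorAlgebra.ι ℤ (Additive.ofMul (Units.mk0 ((1 : F) - (a : F)) h))) 0
  | mod2 : MilnorRel F (2 : TensorAlgebra ℤ (Additive Fˣ)) 0

/-- Mod 2 Milnor K-theory `k^M(F) = T(F^×)/J`. -/
abbrev MilnorK (F : Type) [Field F] := RingQuot (MilnorRel F)

/-- The degree-one class `{a}` of `a ∈ F^×` in mod 2 Milnor K-theory. -/
noncomputable def kcls {F : Type} [Field F] (a : Fˣ) : MilnorK F :=
  RingQuot.mkRingHom (MilnorRel F) (TensorAlgebra.ι ℤ (Additive.ofMul a))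

def sqrtNewton {F : Type} [Field F] (c x : F) : F :=
  x - (x * x - c) / (2 * x)

theorem sqrtNewton_mul_self_sub {F : Type} [Field F] {c x : F} (h2 : (2 : F) ≠ 0)
    (hx : x ≠ 0) :
    sqrtNewton c x * sqrtNewton c x - c = (x * x - c) / (2 * x) * ((x * x - c) / (2 * x)) := by
  unfold sqrtNewton
  field_simp
  ring

namespace PadicData

variable {F K : Type} [Field F] [Field K] (D : PadicData F K)

/-- `v x ≥ N`, with the convention `v 0 = ∞`. -/
def ValGe (N : ℤ) (x : F) : Prop :=
  ∀ h : x ≠ 0, N ≤ D.v (Units.mk0 x h)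

/-- `x ∈ 𝒪^×`. -/
def HasValZero (x : F) : Prop :=
  ∃ h : x ≠ 0, D.v (Units.mk0 x h) = 0

theorem v_one : D.v 1 = 0 := by
  have := D.v_mul 1 1
  simp only [mul_one] at this
  omega

theorem v_inv (x : Fˣ) : D.v x⁻¹ = -D.v x := by
  have := D.v_mul x x⁻¹
  rw [mul_inv_cancel, v_one] at this
  omega

theorem v_neg_one : D.v (-1) = 0 := by
  have := D.v_mul (-1) (-1)
  rw [neg_one_mul, neg_neg, v_one] at this
  omega

theorem v_neg (x : Fˣ) : D.v (-x) = D.v x := by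
  rw [← neg_one_mul, D.v_mul, v_neg_one, zero_add]

variable {D}

theorem valGe_zero (N : ℤ) : D.ValGe N 0 := fun h => absurd rfl h

theorem ValGe.mono {M N : ℤ} {x : F} (hx : D.ValGe N x) (h : M ≤ N) : D.ValGe M x :=
  fun hx0 => h.trans (hx hx0)

theorem ValGe.neg {N : ℤ} {x : F} (hx : D.ValGe N x) : D.ValGe N (-x) := fun h => by
  have hx0 : x ≠ 0 := neg_ne_zero.mp h
  rw [show Units.mk0 (-x) h = -Units.mk0 x hx0 from Units.ext rfl, D.v_neg]
  exact hx hx0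

theorem ValGe.add {N : ℤ} {x y : F} (hx : D.ValGe N x) (hy : D.ValGe N y) :
    D.ValGe N (x + y) := fun h => by
  rcases eq_or_ne x 0 with rfl | hx0
  · simpa using hy (by simpa using h)
  rcases eq_or_ne y 0 with rfl | hy0
  · simpa using hx (by simpa using h)
  exact (le_min (hx hx0) (hy hy0)).trans (D.v_ultra (Units.mk0 x hx0) (Units.mk0 y hy0) h)

theorem ValGe.sub {N : ℤ} {x y : F} (hx : D.ValGe N x) (hy : D.ValGe N y) :
    D.ValGe N (x - y) := by
  rw [sub_eq_add_neg]
  exact hx.add hy.neg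

theorem ValGe.mul {M N : ℤ} {x y : F} (hx : D.ValGe M x) (hy : D.ValGe N y) :
    D.ValGe (M + N) (x * y) := fun h => by
  rw [Units.mk0_mul, D.v_mul]
  exact add_le_add (hx _) (hy _)

theorem eq_zero_of_forall_valGe {x : F} (hx : ∀ n : ℕ, D.ValGe n x) : x = 0 := by
  by_contra h
  have := hx ((D.v (Units.mk0 x h)).toNat + 1) h
  omega

theorem valGe_zero_iff_mem_O {x : F} : D.ValGe 0 x ↔ x ∈ D.O := (D.mem_O x).symm

theorem valGe_one_of_res_eq_zero {x : D.O} (hx : D.res x = 0) : D.ValGe 1 x :=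
  (D.res_eq_zero x).mp hx

theorem hasValZero_iff {x : F} : D.HasValZero x ↔ D.ValGe 0 x ∧ ¬D.ValGe 1 x := by
  constructor
  · rintro ⟨hx0, hv⟩
    exact ⟨fun _ => hv.ge, fun h => by simpa [hv] using h hx0⟩
  · rintro ⟨h0, h1⟩
    have hx0 : x ≠ 0 := fun hx => h1 (hx ▸ valGe_zero 1)
    have hle : ¬1 ≤ D.v (Units.mk0 x hx0) := fun h => h1 fun _ => h
    exact ⟨hx0, by have := h0 hx0; omega⟩

theorem HasValZero.ne_zero {x : F} (hx : D.HasValZero x) : x ≠ 0 := hx.1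

theorem HasValZero.valGe {x : F} (hx : D.HasValZero x) : D.ValGe 0 x :=
  (hasValZero_iff.mp hx).1

theorem HasValZero.mem_O {x : F} (hx : D.HasValZero x) : x ∈ D.O :=
  valGe_zero_iff_mem_O.mp hx.valGe

theorem HasValZero.mul {x y : F} (hx : D.HasValZero x) (hy : D.HasValZero y) :
    D.HasValZero (x * y) := by
  obtain ⟨hx0, hvx⟩ := hx
  obtain ⟨hy0, hvy⟩ := hy
  exact ⟨mul_ne_zero hx0 hy0, by rw [Units.mk0_mul, D.v_mul, hvx, hvy, add_zero]⟩

theorem HasValZero.inv {x : F} (hx : D.HasValZero x) : D.HasValZero x⁻¹ := by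
  obtain ⟨hx0, hv⟩ := hx
  refine ⟨inv_ne_zero hx0, ?_⟩
  rw [show Units.mk0 x⁻¹ (inv_ne_zero hx0) = (Units.mk0 x hx0)⁻¹ from Units.ext rfl,
    v_inv, hv, neg_zero]

theorem HasValZero.add_of_valGe_one {x d : F} (hx : D.HasValZero x) (hd : D.ValGe 1 d) :
    D.HasValZero (x + d) := by
  rw [hasValZero_iff] at hx ⊢
  refine ⟨hx.1.add (hd.mono zero_le_one), fun h => hx.2 ?_⟩
  simpa using h.sub hd

theorem hasValZero_of_res_ne_zero {x : D.O} (hx : D.res x ≠ 0) : D.HasValZero x :=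
  hasValZero_iff.mpr ⟨valGe_zero_iff_mem_O.mpr x.2, mt (D.res_eq_zero x).mpr hx⟩

variable {c x : F}

theorem sqrtNewton_approx (h2 : D.HasValZero 2) (hx : D.HasValZero x) {N : ℤ} (hN : 1 ≤ N)
    (hc : D.ValGe N (x * x - c)) :
    D.HasValZero (sqrtNewton c x) ∧ D.ValGe N (sqrtNewton c x - x) ∧
      D.ValGe (N + N) (sqrtNewton c x * sqrtNewton c x - c) := by
  set e := (x * x - c) / (2 * x) with he_def
  have he : D.ValGe N e := by
    have := hc.mul (h2.mul hx).inv.valGe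
    rwa [add_zero, ← div_eq_mul_inv] at this
  have hstep : sqrtNewton c x = x + -e := by rw [sqrtNewton, he_def]; ring
  refine ⟨hstep ▸ hx.add_of_valGe_one (he.neg.mono hN), by simpa [hstep] using he.neg, ?_⟩
  rw [sqrtNewton_mul_self_sub h2.ne_zero hx.ne_zero]
  exact he.mul he

theorem sqrtNewton_iterate_approx (h2 : D.HasValZero 2) (hx : D.HasValZero x)
    (hc : D.ValGe 1 (x * x - c)) (n : ℕ) :
    D.HasValZero ((sqrtNewton c)^[n] x) ∧
      D.ValGe (n + 1) ((sqrtNewton c)^[n] x * (sqrtNewton c)^[n] x - c) := by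
  induction n with
  | zero => simpa using And.intro hx hc
  | succ n ih =>
    obtain ⟨hxn, -, hcn⟩ := sqrtNewton_approx h2 ih.1 (by omega) ih.2
    rw [Function.iterate_succ_apply']
    exact ⟨hxn, hcn.mono (by omega)⟩

theorem valGe_sub_of_le {f : ℕ → F} (hf : ∀ n : ℕ, D.ValGe (n + 1) (f (n + 1) - f n))
    {m n : ℕ} (h : n ≤ m) : D.ValGe (n + 1) (f m - f n) := by
  induction m, h using Nat.le_induction with
  | base => simpa using valGe_zero _
  | succ m hnm ih =>
    rw [← sub_add_sub_cancel _ (f m)]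
    exact ((hf m).mono (by omega)).add ih

theorem exists_valGe_sub_of_valGe_succ_sub {f : ℕ → F}
    (hf : ∀ n : ℕ, D.ValGe (n + 1) (f (n + 1) - f n)) :
    ∃ a, ∀ n : ℕ, D.ValGe (n + 1) (a - f n) := by
  obtain ⟨a, ha⟩ := D.complete f fun N => ⟨N.toNat, fun m hm n hn => by
    rcases le_total n m with h | h
    · exact (valGe_sub_of_le hf h).mono (by omega)
    · have := ((valGe_sub_of_le hf h).mono (M := N) (by omega)).neg
      rwa [neg_sub] at this⟩
  refine ⟨a, fun n => ?_⟩
  obtain ⟨M, hM⟩ := ha (n + 1)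
  have hlim : D.ValGe (n + 1) (f (max M n) - a) := hM _ (le_max_left M n)
  rw [← sub_sub_sub_cancel_left (f n) a (f (max M n))]
  exact (valGe_sub_of_le hf (le_max_right M n)).sub hlim

theorem exists_mul_self_eq_of_valGe_one (h2 : D.HasValZero 2) (hx : D.HasValZero x)
    (hc : D.ValGe 1 (x * x - c)) : ∃ a, a * a = c := by
  have happrox := sqrtNewton_iterate_approx h2 hx hc
  obtain ⟨a, ha⟩ := exists_valGe_sub_of_valGe_succ_sub (f := fun n => (sqrtNewton c)^[n] x)
    fun n => by
      rw [Function.iterate_succ_apply']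
      exact (sqrtNewton_approx h2 (happrox n).1 (by omega) (happrox n).2).2.1
  refine ⟨a, sub_eq_zero.mp (eq_zero_of_forall_valGe (D := D) fun n => ?_)⟩
  set y := (sqrtNewton c)^[n] x
  have hsum : D.ValGe 0 (a + y) := by
    rw [show a + y = (a - y) + 2 * y by ring]
    exact ((ha n).mono (by omega)).add (by simpa using h2.valGe.mul (happrox n).1.valGe)
  rw [show a * a - c = (a - y) * (a + y) + (y * y - c) by ring]
  exact (((ha n).mul hsum).add (by simpa using (happrox n).2)).mono (by omega)

theorem exists_mul_self_eq (h2 : (2 : K) ≠ 0) {c : D.O} {s : K} (hs : s ≠ 0)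
    (hc : D.res c = s * s) : ∃ x : F, x * x = c := by
  obtain ⟨x, rfl⟩ := D.res_surj s
  have h2' : D.HasValZero (2 : F) := by
    have := hasValZero_of_res_ne_zero (x := (2 : D.O)) (by rwa [map_ofNat])
    rwa [show ((2 : D.O) : F) = 2 by norm_cast] at this
  refine exists_mul_self_eq_of_valGe_one h2' (hasValZero_of_res_ne_zero hs) ?_
  simpa using valGe_one_of_res_eq_zero (x := x * x - c) (by rw [map_sub, map_mul, hc, sub_self])

theorem exists_mul_mul_self_eq_one_add_mul_self (h2 : (2 : K) ≠ 0) {u : Fˣ}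
    {hu : (u : F) ∈ D.O} (hu0 : D.res ⟨u, hu⟩ ≠ 0) {p q : K} (hp : p ≠ 0) (hq : q ≠ 0)
    (hpq : D.res ⟨u, hu⟩ = p * p + q * q) : ∃ x y : Fˣ, (u : F) * x * x = 1 + y * y := by
  obtain ⟨y, hy⟩ := D.res_surj (q / p)
  have hy0 : (y : F) ≠ 0 := fun h =>
    div_ne_zero hq hp (by rw [← hy, show y = 0 from Subtype.ext h, map_zero])
  set w : D.O := ⟨(u : F)⁻¹, (hasValZero_of_res_ne_zero hu0).inv.mem_O⟩ with hw_def
  have hw : D.res w * D.res ⟨u, hu⟩ = 1 := by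
    rw [← map_mul, show w * ⟨u, hu⟩ = 1 from Subtype.ext (inv_mul_cancel₀ u.ne_zero),
      map_one]
  set c := w * (1 + y * y) with hc_def
  have hc : D.res c = p⁻¹ * p⁻¹ := by
    rw [hpq] at hw
    rw [hc_def, map_mul, map_add, map_one, map_mul, hy]
    field_simp
    linear_combination hw
  obtain ⟨x, hx⟩ := D.exists_mul_self_eq h2 (inv_ne_zero hp) hc
  have hc0 : (c : F) ≠ 0 :=
    (hasValZero_of_res_ne_zero (by rw [hc]; exact mul_self_ne_zero.mpr (inv_ne_zero hp))).ne_zero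
  have hx0 : x ≠ 0 := by
    rintro rfl
    exact hc0 (by rw [← hx, mul_zero])
  refine ⟨Units.mk0 x hx0, Units.mk0 y hy0, ?_⟩
  simp only [Units.val_mk0]
  rw [mul_assoc, hx, hc_def, hw_def]
  push_cast
  field_simp

end PadicData

theorem FiniteField.exists_sq_add_sq_of_not_isSquare {K : Type*} [Field K] [Fintype K]
    (hK : Fintype.card K % 2 = 1) {r : K} (hr : ¬IsSquare r) :
    ∃ p q : K, p ≠ 0 ∧ q ≠ 0 ∧ r = p * p + q * q := by
  open Polynomial in
  obtain ⟨p, q, hpq⟩ := FiniteField.exists_root_sum_quadratic (f := X ^ 2) (g := X ^ 2 - C r)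
    (degree_X_pow 2) (degree_X_pow_sub_C two_pos r) hK
  simp only [Polynomial.eval_pow, Polynomial.eval_X, Polynomial.eval_sub, Polynomial.eval_C] at hpq
  refine ⟨p, q, ?_, ?_, by linear_combination -hpq⟩
  · rintro rfl
    exact hr ⟨q, by linear_combination -hpq⟩
  · rintro rfl
    exact hr ⟨p, by linear_combination -hpq⟩

section MilnorK

variable {F : Type} [Field F]

theorem MilnorK.add_self (z : MilnorK F) : z + z = 0 := by
  have h2 := RingQuot.mkRingHom_rel (MilnorRel.mod2 (F := F))
  rw [map_zero, map_ofNat] at h2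
  rw [← two_mul, h2, zero_mul]

theorem MilnorK.neg_eq (z : MilnorK F) : -z = z :=
  neg_eq_of_add_eq_zero_left (add_self z)

theorem kcls_mul (a b : Fˣ) : kcls (a * b) = kcls a + kcls b := by
  simp only [kcls, ofMul_mul, map_add]

theorem kcls_one : kcls (1 : Fˣ) = 0 := by
  simp only [kcls, ofMul_one, map_zero]

theorem kcls_inv (a : Fˣ) : kcls a⁻¹ = kcls a := by
  have h : kcls a + kcls a⁻¹ = 0 := by rw [← kcls_mul, mul_inv_cancel, kcls_one]
  rw [eq_neg_of_add_eq_zero_right h, MilnorK.neg_eq]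

theorem kcls_mul_mul_self (a b : Fˣ) : kcls (a * (b * b)) = kcls a := by
  rw [kcls_mul, kcls_mul, MilnorK.add_self, add_zero]

theorem kcls_mul_kcls_one_sub (a : Fˣ) (h : (1 : F) - (a : F) ≠ 0) :
    kcls a * kcls (Units.mk0 ((1 : F) - (a : F)) h) = 0 := by
  rw [kcls, kcls, ← map_mul]
  exact (RingQuot.mkRingHom_rel (MilnorRel.steinberg a h)).trans (map_zero _)

theorem kcls_mul_kcls_neg (a : Fˣ) : kcls a * kcls (-a) = 0 := by
  by_cases h : (1 : F) - (a : F) = 0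
  · rw [show a = 1 from Units.ext (sub_eq_zero.mp h).symm, kcls_one, zero_mul]
  have h' : (1 : F) - ((a⁻¹ : Fˣ) : F) ≠ 0 := by
    rw [Units.val_inv_eq_inv_val, sub_ne_zero, ne_comm, inv_ne_one]
    exact fun ha => h (by rw [ha, sub_self])
  have hfac :
      Units.mk0 ((1 : F) - (a : F)) h = -a * Units.mk0 ((1 : F) - ((a⁻¹ : Fˣ) : F)) h' := by
    ext
    simp only [Units.val_mk0, Units.val_mul, Units.val_neg, Units.val_inv_eq_inv_val]
    field_simp
    ring
  calc kcls a * kcls (-a)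
      = kcls a * kcls (-a) +
          kcls a⁻¹ * kcls (Units.mk0 ((1 : F) - ((a⁻¹ : Fˣ) : F)) h') := by
        rw [kcls_mul_kcls_one_sub, add_zero]
    _ = kcls a * kcls (Units.mk0 ((1 : F) - (a : F)) h) := by
        rw [hfac, kcls_mul, mul_add, kcls_inv]
    _ = 0 := kcls_mul_kcls_one_sub a h

theorem kcls_mul_self (a : Fˣ) : kcls a * kcls a = kcls a * kcls (-1) := by
  have h := kcls_mul_kcls_neg a
  rw [← neg_one_mul, kcls_mul, mul_add, add_comm] at h
  rw [eq_neg_of_add_eq_zero_left h, MilnorK.neg_eq]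

theorem kcls_mul_kcls_neg_one_of_mul_mul_self_eq {a x y : Fˣ}
    (h : (a : F) * x * x = 1 + y * y) : kcls a * kcls (-1) = 0 := by
  have h1 : (1 : F) - ((a * (x * x) : Fˣ) : F) ≠ 0 := by
    push_cast
    rw [← mul_assoc, h]
    simp [y.ne_zero]
  have hfac : Units.mk0 _ h1 = -1 * (y * y) := by
    ext
    simp only [Units.val_mk0, Units.val_mul, Units.val_neg, Units.val_one]
    linear_combination -h
  calc kcls a * kcls (-1) = kcls (a * (x * x)) * kcls (Units.mk0 _ h1) := by
        rw [hfac, kcls_mul_mul_self, kcls_mul_mul_self]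
    _ = 0 := kcls_mul_kcls_one_sub _ h1

end MilnorK

theorem milnor_u_sq_eq_zero_general {F K : Type} [Field F] [Field K] [Fintype K]
    (D : PadicData F K) (hodd : Odd (Fintype.card K))
    (u : Fˣ) (humem : (u : F) ∈ D.O)
    (hu : ¬ ∃ b : K, b * b = D.res ⟨(u : F), humem⟩) :
    kcls u * kcls u = 0 := by
  have hK : Fintype.card K % 2 = 1 := Nat.odd_iff.mp hodd
  have hr : ¬IsSquare (D.res ⟨u, humem⟩) := fun ⟨b, hb⟩ => hu ⟨b, hb.symm⟩
  obtain ⟨p, q, hp, hq, hpq⟩ := FiniteField.exists_sq_add_sq_of_not_isSquare hK hr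
  have h2 : (2 : K) ≠ 0 := Ring.two_ne_zero (mt FiniteField.even_card_iff_char_two.mp (by omega))
  have hu0 : D.res ⟨u, humem⟩ ≠ 0 := fun h => hr (h ▸ IsSquare.zero)
  obtain ⟨x, y, hxy⟩ := D.exists_mul_mul_self_eq_one_add_mul_self h2 hu0 hp hq hpq
  rw [kcls_mul_self, kcls_mul_kcls_neg_one_of_mul_mul_self_eq hxy]

/-- `{u}·{u} = 0` in `k^M(F)` for a unit `u` whose residue is a nonsquare. -/
theorem milnor_u_sq_eq_zero {F K : Type} [Field F] [CharZero F] [Field K] [Fintype K]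
    (D : PadicData F K) (hodd : Odd (Fintype.card K))
    (u : Fˣ) (hu0 : D.v u = 0) (humem : (u : F) ∈ D.O)
    (hu : ¬ ∃ b : K, b * b = D.res ⟨(u : F), humem⟩) :
    kcls u * kcls u = 0 :=
  milnor_u_sq_eq_zero_general D hodd u humem hu
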